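/- Let $f:\mathbb R\to\mathbb R$ be bounded and continuous and $\overline\lambda\ge 0$. For each $\varepsilon\in(0,1]$ let $v^{\varepsilon}:[0,1]\times\mathbb R\to\mathbb R$ be a continuous viscosity solution of $v_t+\tfrac12\big((\overline\lambda^2+\varepsilon^2)v_{xx}^+-\varepsilon^2 v_{xx}^-\big)=0$ on $[0,1)\times\mathbb R$ with $v^{\varepsilon}(1,x)=f(x)$, and assume $\sup_{\varepsilon\in(0,1]}\|v^{\varepsilon}\|_{\infty}<\infty$. Define the upper half-relaxed limit $\overline v(t,x)=\limsup_{(s,y)\to(t,x),\,\varepsilon\to0}v^{\varepsilon}(s,y)$ on $Q=[0,1]\times\mathbb R$. Then $\overline v$ is a bounded upper semicontinuous viscosity subsolution of $v_t+\tfrac12\overline\lambda^2 v_{xx}^+=0$ on $[0,1)\times\mathbb R$, and moreover $\overline v(1,x)=f(x)$ for every $x\in\mathbb R$. -/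

import Mathlib

open Filter

/-- The parabolic cylinder `Q = [0,1] × ℝ`. -/
def QQ : Set (ℝ × ℝ) := Set.Icc (0:ℝ) 1 ×ˢ Set.univ

/-- The Hamiltonian `s ↦ ½((λ̄² + ε²) s⁺ - ε² s⁻)` of the perturbed `G`-heat equation. -/
noncomputable def Geps (lb ε : ℝ) (t : ℝ) : ℝ :=
  (1 / 2) * ((lb ^ 2 + ε ^ 2) * max t 0 - ε ^ 2 * max (-t) 0)

/-- The Hamiltonian `s ↦ ½ λ̄² s⁺` of the limit equation. -/
noncomputable def Glim (lb : ℝ) (t : ℝ) : ℝ := (1 / 2) * (lb ^ 2 * max t 0)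

/-- Viscosity subsolution of `v_t + G(v_xx) = 0` on `Q° = [0,1) × ℝ` with terminal
datum `f`: the terminal inequality and the test-function property at strict local
maximum points of `u - φ` on `Q°`. -/
def IsViscSubsol (G : ℝ → ℝ) (f : ℝ → ℝ) (u : ℝ × ℝ → ℝ) : Prop :=
  (∀ x : ℝ, u (1, x) ≤ f x) ∧
  ∀ φ : ℝ × ℝ → ℝ, ContDiff ℝ 2 φ →
    ∀ z : ℝ × ℝ, z.1 ∈ Set.Ico (0:ℝ) 1 →
      (∃ U ∈ nhds z, ∀ w ∈ U, w.1 ∈ Set.Ico (0:ℝ) 1 → w ≠ z →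
        u w - φ w < u z - φ z) →
      -(deriv (fun t => φ (t, z.2)) z.1)
        - G (deriv (deriv fun x => φ (z.1, x)) z.2) ≤ 0

/-- Viscosity supersolution: strict local minimum points, reversed inequalities. -/
def IsViscSupersol (G : ℝ → ℝ) (f : ℝ → ℝ) (u : ℝ × ℝ → ℝ) : Prop :=
  (∀ x : ℝ, f x ≤ u (1, x)) ∧
  ∀ φ : ℝ × ℝ → ℝ, ContDiff ℝ 2 φ →
    ∀ z : ℝ × ℝ, z.1 ∈ Set.Ico (0:ℝ) 1 →
      (∃ U ∈ nhds z, ∀ w ∈ U, w.1 ∈ Set.Ico (0:ℝ) 1 → w ≠ z →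
        u z - φ z < u w - φ w) →
      0 ≤ -(deriv (fun t => φ (t, z.2)) z.1)
        - G (deriv (deriv fun x => φ (z.1, x)) z.2)

/-- Upper half-relaxed limit `v̄(z) = limsup_{(s,y) → z in Q, ε → 0⁺} v^ε(s,y)`. -/
noncomputable def upperRelaxedLimit (vE : ℝ → ℝ × ℝ → ℝ) (z : ℝ × ℝ) : ℝ :=
  Filter.limsup (fun p : ℝ × (ℝ × ℝ) => vE p.1 p.2)
    ((nhdsWithin 0 (Set.Ioc 0 1)) ×ˢ (nhdsWithin z QQ))

/-! The bound and the upper semicontinuity of `v̄` come straight from the definition of the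
half-relaxed limit. The subsolution property is the Barles–Perthame stability argument: if
`v̄ - φ` has a strict maximum at `z`, then for arbitrarily small `ε` the function `v^ε - φ` has a
maximum over a compact neighbourhood of `z` at a point arbitrarily close to `z`; the `ε`-equation
holds there, and the joint continuity of `(ε, s) ↦ G_ε(s)` carries the inequality to the limit.
At `t = 1`, `f ≤ v̄(1, ·)` because `v^ε(1, ·) = f`. Conversely, for `η > 0` the barrier
`f(x₀) + η + C (x - x₀)² + K (1 - t)` dominates `f` at `t = 1` and is a strict classical
supersolution of every `ε`-equation, so it cannot be touched from above by `v^ε` at an interior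
maximum of `v^ε - barrier`; hence it dominates every `v^ε`, and `v̄(1, x₀) ≤ f(x₀) + η`. -/

open Set Topology

noncomputable def timeDeriv (φ : ℝ × ℝ → ℝ) (z : ℝ × ℝ) : ℝ := deriv (fun t => φ (t, z.2)) z.1

/-- `spaceDeriv (spaceDeriv φ) z` unfolds to the `deriv (deriv fun x => φ (z.1, x)) z.2` of
`IsViscSubsol`. -/
noncomputable def spaceDeriv (φ : ℝ × ℝ → ℝ) (z : ℝ × ℝ) : ℝ := deriv (fun x => φ (z.1, x)) z.2

section SliceDerivatives

variable {φ ψ : ℝ × ℝ → ℝ} {z : ℝ × ℝ}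

theorem timeDeriv_eq_fderiv (h : DifferentiableAt ℝ φ z) : timeDeriv φ z = fderiv ℝ φ z (1, 0) :=
  (h.hasFDerivAt.comp_hasDerivAt z.1 ((hasDerivAt_id z.1).prodMk (hasDerivAt_const z.1 z.2))).deriv

theorem spaceDeriv_eq_fderiv (h : DifferentiableAt ℝ φ z) : spaceDeriv φ z = fderiv ℝ φ z (0, 1) :=
  (h.hasFDerivAt.comp_hasDerivAt z.2 ((hasDerivAt_const z.2 z.1).prodMk (hasDerivAt_id z.2))).deriv

theorem continuous_timeDeriv (h : ContDiff ℝ 1 φ) : Continuous (timeDeriv φ) := by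
  rw [show timeDeriv φ = fun z => fderiv ℝ φ z (1, 0) from
    funext fun z => timeDeriv_eq_fderiv (h.differentiable one_ne_zero z)]
  exact (h.continuous_fderiv one_ne_zero).clm_apply continuous_const

theorem contDiff_spaceDeriv {n : WithTop ℕ∞} (h : ContDiff ℝ (n + 1) φ) :
    ContDiff ℝ n (spaceDeriv φ) := by
  rw [show spaceDeriv φ = fun z => fderiv ℝ φ z (0, 1) from
    funext fun z => spaceDeriv_eq_fderiv (h.differentiable (by simp) z)]
  exact (h.fderiv_right le_rfl).clm_apply contDiff_const

theorem continuous_spaceDeriv_spaceDeriv (h : ContDiff ℝ 2 φ) :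
    Continuous (spaceDeriv (spaceDeriv φ)) :=
  (contDiff_spaceDeriv (n := 0) (contDiff_spaceDeriv (n := 1) h)).continuous

theorem timeDeriv_add (hφ : DifferentiableAt ℝ φ z) (hψ : DifferentiableAt ℝ ψ z) :
    timeDeriv (φ + ψ) z = timeDeriv φ z + timeDeriv ψ z := by
  rw [timeDeriv_eq_fderiv hφ, timeDeriv_eq_fderiv hψ, timeDeriv_eq_fderiv (hφ.add hψ),
    fderiv_add hφ hψ, add_apply]

theorem spaceDeriv_add (hφ : DifferentiableAt ℝ φ z) (hψ : DifferentiableAt ℝ ψ z) :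
    spaceDeriv (φ + ψ) z = spaceDeriv φ z + spaceDeriv ψ z := by
  rw [spaceDeriv_eq_fderiv hφ, spaceDeriv_eq_fderiv hψ, spaceDeriv_eq_fderiv (hφ.add hψ),
    fderiv_add hφ hψ, add_apply]

theorem spaceDeriv_spaceDeriv_add (hφ : ContDiff ℝ 2 φ) (hψ : ContDiff ℝ 2 ψ) :
    spaceDeriv (spaceDeriv (φ + ψ)) z =
      spaceDeriv (spaceDeriv φ) z + spaceDeriv (spaceDeriv ψ) z := by
  have hφ' : ContDiff ℝ 1 (spaceDeriv φ) := contDiff_spaceDeriv hφ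
  have hψ' : ContDiff ℝ 1 (spaceDeriv ψ) := contDiff_spaceDeriv hψ
  rw [show spaceDeriv (φ + ψ) = spaceDeriv φ + spaceDeriv ψ from funext fun w =>
      spaceDeriv_add (hφ.differentiable two_ne_zero w) (hψ.differentiable two_ne_zero w),
    spaceDeriv_add (hφ'.differentiable one_ne_zero z) (hψ'.differentiable one_ne_zero z)]

end SliceDerivatives

noncomputable def quartic (c p : ℝ × ℝ) : ℝ := (p.1 - c.1) ^ 4 + (p.2 - c.2) ^ 4

section Quartic

variable (c : ℝ × ℝ)

theorem contDiff_quartic : ContDiff ℝ 2 (quartic c) := by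
  unfold quartic; fun_prop

theorem quartic_self : quartic c c = 0 := by simp [quartic]

theorem quartic_pos {p : ℝ × ℝ} (h : p ≠ c) : 0 < quartic c p := by
  rcases (not_and_or.mp fun h' => h (Prod.ext h'.1 h'.2)) with h1 | h2
  · have := pow_pos (sq_pos_of_ne_zero (sub_ne_zero.mpr h1)) 2
    unfold quartic; nlinarith [pow_two_nonneg ((p.2 - c.2) ^ 2)]
  · have := pow_pos (sq_pos_of_ne_zero (sub_ne_zero.mpr h2)) 2
    unfold quartic; nlinarith [pow_two_nonneg ((p.1 - c.1) ^ 2)]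

theorem timeDeriv_quartic_self : timeDeriv (quartic c) c = 0 := by
  simp [timeDeriv, quartic]

theorem spaceDeriv_spaceDeriv_quartic_self : spaceDeriv (spaceDeriv (quartic c)) c = 0 := by
  have h : (fun x => spaceDeriv (quartic c) (c.1, x)) = fun x => 4 * (x - c.2) ^ 3 := by
    funext x; simp [spaceDeriv, quartic]
  rw [spaceDeriv, h]
  simp

end Quartic

noncomputable def relaxedLimsup {α X : Type*} [TopologicalSpace X] (F : Filter α) (s : Set X)
    (u : α → X → ℝ) (z : X) : ℝ :=
  limsup (fun p : α × X => u p.1 p.2) (F ×ˢ 𝓝[s] z)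

section RelaxedLimsup

variable {α X : Type*} [TopologicalSpace X] {F : Filter α} {s : Set X} {u : α → X → ℝ}
  {M : ℝ} {z : X}

theorem eventually_abs_le_prod_nhdsWithin (hM : ∀ᶠ e in F, ∀ x ∈ s, |u e x| ≤ M) (z : X) :
    ∀ᶠ p in F ×ˢ 𝓝[s] z, |u p.1 p.2| ≤ M :=
  (hM.prod_mk self_mem_nhdsWithin).mono fun p hp => hp.1 p.2 hp.2

theorem isBoundedUnder_le_prod_nhdsWithin (hM : ∀ᶠ e in F, ∀ x ∈ s, |u e x| ≤ M) (z : X) :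
    IsBoundedUnder (· ≤ ·) (F ×ˢ 𝓝[s] z) (fun p => u p.1 p.2) :=
  isBoundedUnder_of_eventually_le
    ((eventually_abs_le_prod_nhdsWithin hM z).mono fun _ h => (abs_le.mp h).2)

theorem isCoboundedUnder_le_prod_nhdsWithin [F.NeBot] (hM : ∀ᶠ e in F, ∀ x ∈ s, |u e x| ≤ M)
    (hz : z ∈ s) :
    IsCoboundedUnder (· ≤ ·) (F ×ˢ 𝓝[s] z) (fun p => u p.1 p.2) :=
  have := mem_closure_iff_nhdsWithin_neBot.mp (subset_closure hz)
  isCoboundedUnder_le_of_eventually_le _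
    ((eventually_abs_le_prod_nhdsWithin hM z).mono fun _ h => (abs_le.mp h).1)

theorem abs_relaxedLimsup_le [F.NeBot] (hM : ∀ᶠ e in F, ∀ x ∈ s, |u e x| ≤ M) (hz : z ∈ s) :
    |relaxedLimsup F s u z| ≤ M := by
  have := mem_closure_iff_nhdsWithin_neBot.mp (subset_closure hz)
  have h := eventually_abs_le_prod_nhdsWithin hM z
  exact abs_le.mpr
    ⟨le_limsup_of_frequently_le (h.mono fun _ h => (abs_le.mp h).1).frequently
      (isBoundedUnder_le_prod_nhdsWithin hM z),
    limsup_le_of_le (isCoboundedUnder_le_prod_nhdsWithin hM hz) (h.mono fun _ h => (abs_le.mp h).2)⟩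

theorem upperSemicontinuousOn_relaxedLimsup [F.NeBot]
    (hM : ∀ᶠ e in F, ∀ x ∈ s, |u e x| ≤ M) : UpperSemicontinuousOn (relaxedLimsup F s u) s := by
  intro z _ c hc
  obtain ⟨c', hzc', hc'c⟩ := exists_between hc
  obtain ⟨pa, hpa, pb, hpb, hp⟩ := eventually_prod_iff.mp
    (eventually_lt_of_limsup_lt hzc' (isBoundedUnder_le_prod_nhdsWithin hM z))
  filter_upwards [eventually_eventually_nhdsWithin.mpr hpb, self_mem_nhdsWithin] with w hw hws
  exact (limsup_le_of_le (isCoboundedUnder_le_prod_nhdsWithin hM hws)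
    (eventually_prod_iff.mpr ⟨pa, hpa, pb, hw, fun {_} ha {_} hb => (hp ha hb).le⟩)).trans_lt hc'c

theorem le_relaxedLimsup [F.NeBot] (hM : ∀ᶠ e in F, ∀ x ∈ s, |u e x| ≤ M) (hz : z ∈ s) {c : ℝ}
    (hc : ∀ᶠ e in F, c ≤ u e z) : c ≤ relaxedLimsup F s u z := by
  have hle : F ×ˢ pure z ≤ F ×ˢ 𝓝[s] z := prod_mono le_rfl (pure_le_nhdsWithin hz)
  have hc' : ∀ᶠ p in F ×ˢ pure z, c ≤ u p.1 p.2 :=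
    (hc.prod_mk (eventually_pure.mpr rfl)).mono fun p hp => hp.2 ▸ hp.1
  calc c ≤ limsup (fun p : α × X => u p.1 p.2) (F ×ˢ pure z) :=
        le_limsup_of_frequently_le hc'.frequently
          ((isBoundedUnder_le_prod_nhdsWithin hM z).mono hle)
    _ ≤ relaxedLimsup F s u z :=
        limsup_le_limsup_of_le hle (isCoboundedUnder_le_of_eventually_le _ hc')
          (isBoundedUnder_le_prod_nhdsWithin hM z)

theorem relaxedLimsup_le [F.NeBot] (hM : ∀ᶠ e in F, ∀ x ∈ s, |u e x| ≤ M) (hz : z ∈ s)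
    {w : X → ℝ} (hw : ContinuousWithinAt w s z) (huw : ∀ᶠ e in F, ∀ x ∈ s, u e x ≤ w x) :
    relaxedLimsup F s u z ≤ w z := by
  have := mem_closure_iff_nhdsWithin_neBot.mp (subset_closure hz)
  have hw' : Tendsto (fun p : α × X => w p.2) (F ×ˢ 𝓝[s] z) (𝓝 (w z)) := hw.tendsto.comp tendsto_snd
  rw [← hw'.limsup_eq]
  exact limsup_le_limsup ((huw.prod_mk self_mem_nhdsWithin).mono fun p hp => hp.1 p.2 hp.2)
    (isCoboundedUnder_le_prod_nhdsWithin hM hz) hw'.isBoundedUnder_le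

theorem eventually_forall_lt_of_relaxedLimsup_lt (hM : ∀ᶠ e in F, ∀ x ∈ s, |u e x| ≤ M)
    {K : Set X} (hK : IsCompact K) {w : X → ℝ} (hw : ∀ q ∈ K, ContinuousAt w q)
    (hlt : ∀ q ∈ K, relaxedLimsup F s u q < w q) :
    ∀ᶠ e in F, ∀ q ∈ K, q ∈ s → u e q < w q := by
  have hloc : ∀ q ∈ K, ∀ᶠ p in F ×ˢ 𝓝 q, p.2 ∈ s → u p.1 p.2 < w p.2 := by
    intro q hq
    obtain ⟨c, hqc, hcw⟩ := exists_between (hlt q hq)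
    obtain ⟨pa, hpa, pb, hpb, hp⟩ := eventually_prod_iff.mp
      (eventually_lt_of_limsup_lt hqc (isBoundedUnder_le_prod_nhdsWithin hM q))
    refine eventually_prod_iff.mpr ⟨pa, hpa, fun x => x ∈ s → pb x ∧ c < w x,
      (eventually_nhdsWithin_iff.mp hpb).and ((hw q hq).eventually (lt_mem_nhds hcw)) |>.mono
        fun x hx hxs => ⟨hx.1 hxs, hx.2⟩, fun ha x hx hxs => ?_⟩
    exact (hp ha (hx hxs).1).trans (hx hxs).2
  exact (Filter.Eventually.curry (hK.mem_prod_nhdsSet_of_forall hloc)).mono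
    fun _ he => he.self_of_nhdsSet

/-- Off `V`, upper semicontinuity on the compact `K \ V` keeps `relaxedLimsup F s u - φ` a fixed
gap below its value at `z`, and the gap passes to `u e - φ` uniformly on `K \ V` for `e` close
to the limit, while near `z` the values of `u e - φ` come within the gap of the maximum. -/
theorem frequently_exists_isMaxOn_near [F.NeBot] (hM : ∀ᶠ e in F, ∀ x ∈ s, |u e x| ≤ M)
    (hcont : ∀ᶠ e in F, ContinuousOn (u e) s) {φ : X → ℝ} (hφ : Continuous φ) (hz : z ∈ s)
    {K : Set X} (hK : IsCompact K) (hKs : K ⊆ s) (hKz : K ∈ 𝓝[s] z)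
    (hstrict : ∀ q ∈ K, q ≠ z →
      relaxedLimsup F s u q - φ q < relaxedLimsup F s u z - φ z)
    {V : Set X} (hV : IsOpen V) (hzV : z ∈ V) :
    ∃ᶠ e in F, ∃ m ∈ K ∩ V, IsMaxOn (fun q => u e q - φ q) K m := by
  obtain ⟨c, hcz, hKc⟩ : ∃ c < relaxedLimsup F s u z - φ z,
      ∀ q ∈ K \ V, relaxedLimsup F s u q - φ q ≤ c := by
    rcases (K \ V).eq_empty_or_nonempty with hKV | hKV
    · exact ⟨relaxedLimsup F s u z - φ z - 1, by linarith, by simp [hKV]⟩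
    obtain ⟨q, hq, hqmax⟩ := ((upperSemicontinuousOn_relaxedLimsup hM).add
      hφ.neg.continuousOn.upperSemicontinuousOn).mono
        (sdiff_subset.trans hKs) |>.exists_isMaxOn hKV (hK.diff hV)
    refine ⟨_, hstrict q hq.1 fun h => hq.2 (h ▸ hzV), fun p hp => ?_⟩
    have : relaxedLimsup F s u p + -φ p ≤ relaxedLimsup F s u q + -φ q := hqmax hp
    linarith
  obtain ⟨b, hcb, hbz⟩ := exists_between hcz
  have hfar : ∀ᶠ e in F, ∀ q ∈ K \ V, q ∈ s → u e q < φ q + b :=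
    eventually_forall_lt_of_relaxedLimsup_lt hM (hK.diff hV)
      (fun q _ => (hφ.add continuous_const).continuousAt) fun q hq => by linarith [hKc q hq]
  have hnear : ∃ᶠ p in F ×ˢ 𝓝[s] z, b < u p.1 p.2 - φ p.2 := by
    set γ := relaxedLimsup F s u z - φ z - b
    have hφz : ∀ᶠ p in F ×ˢ 𝓝[s] z, φ p.2 < φ z + γ / 2 :=
      (hφ.continuousWithinAt.tendsto.comp tendsto_snd).eventually (gt_mem_nhds (by linarith))
    refine ((frequently_lt_of_lt_limsup (isCoboundedUnder_le_prod_nhdsWithin hM hz)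
      (show relaxedLimsup F s u z - γ / 2 < relaxedLimsup F s u z by linarith)).and_eventually
        hφz).mono fun p hp => by linarith [hp.1, hp.2]
  refine tendsto_fst.frequently ((hnear.and_eventually ((hcont.and hfar).prod_mk hKz)).mono ?_)
  rintro ⟨e, p⟩ ⟨hbp, ⟨hce, hefar⟩, hpK⟩
  obtain ⟨m, hmK, hmax⟩ := hK.exists_isMaxOn ⟨p, hpK⟩ ((hce.mono hKs).sub hφ.continuousOn)
  refine ⟨m, ⟨hmK, by_contra fun hmV => ?_⟩, hmax⟩
  have : u e p - φ p ≤ u e m - φ m := hmax hpK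
  linarith [hefar m ⟨hmK, hmV⟩ (hKs hmK)]

end RelaxedLimsup

def IsInteriorViscSubsol (G : ℝ → ℝ) (u : ℝ × ℝ → ℝ) : Prop :=
  ∀ φ : ℝ × ℝ → ℝ, ContDiff ℝ 2 φ →
    ∀ z : ℝ × ℝ, z.1 ∈ Ico (0:ℝ) 1 →
      (∃ U ∈ 𝓝 z, ∀ w ∈ U, w.1 ∈ Ico (0:ℝ) 1 → w ≠ z → u w - φ w < u z - φ z) →
      -timeDeriv φ z - G (spaceDeriv (spaceDeriv φ) z) ≤ 0

theorem isViscSubsol_iff {G f : ℝ → ℝ} {u : ℝ × ℝ → ℝ} :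
    IsViscSubsol G f u ↔ (∀ x, u (1, x) ≤ f x) ∧ IsInteriorViscSubsol G u :=
  Iff.rfl

theorem isClosed_QQ : IsClosed QQ := isClosed_Icc.prod isClosed_univ

theorem mk_one_mem_QQ (x : ℝ) : ((1:ℝ), x) ∈ QQ := ⟨right_mem_Icc.mpr zero_le_one, trivial⟩

theorem mem_QQ_of_mem_Ico {z : ℝ × ℝ} (hz : z.1 ∈ Ico (0:ℝ) 1) : z ∈ QQ :=
  ⟨Ico_subset_Icc_self hz, trivial⟩

/-- Perturbing `φ` by `quartic z` makes a local maximum strict without changing the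
derivatives entering the equation at `z`. -/
theorem IsInteriorViscSubsol.le_of_isLocalMaxOn {G : ℝ → ℝ} {u φ : ℝ × ℝ → ℝ} {z : ℝ × ℝ}
    (hu : IsInteriorViscSubsol G u) (hφ : ContDiff ℝ 2 φ) (hz : z.1 ∈ Ico (0:ℝ) 1)
    (hmax : IsLocalMaxOn (u - φ) (Prod.fst ⁻¹' Ico 0 1) z) :
    -timeDeriv φ z - G (spaceDeriv (spaceDeriv φ) z) ≤ 0 := by
  have hq := contDiff_quartic z
  have hstrict : ∃ U ∈ 𝓝 z, ∀ w ∈ U, w.1 ∈ Ico (0:ℝ) 1 → w ≠ z →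
      u w - (φ + quartic z) w < u z - (φ + quartic z) z := by
    refine ⟨_, eventually_nhdsWithin_iff.mp hmax, fun w hw hwI hwz => ?_⟩
    have := hw hwI
    simp only [Pi.sub_apply] at this
    simp only [Pi.add_apply, quartic_self]
    linarith [quartic_pos z hwz]
  have key := hu (φ + quartic z) (hφ.add hq) z hz hstrict
  rwa [timeDeriv_add (hφ.differentiable two_ne_zero z) (hq.differentiable two_ne_zero z),
    timeDeriv_quartic_self, spaceDeriv_spaceDeriv_add hφ hq, spaceDeriv_spaceDeriv_quartic_self,
    add_zero, add_zero] at key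

theorem IsViscSubsol.le_of_strictSupersolution {G f : ℝ → ℝ} {u w : ℝ × ℝ → ℝ}
    (hsub : IsViscSubsol G f u) (hu : ContinuousOn u QQ) (hw : ContDiff ℝ 2 w)
    (hwG : ∀ z : ℝ × ℝ, z.1 ∈ Ico (0:ℝ) 1 →
      0 < -timeDeriv w z - G (spaceDeriv (spaceDeriv w) z))
    (hfw : ∀ x, f x ≤ w (1, x)) {K : Set (ℝ × ℝ)} (hK : IsCompact K)
    (hfar : ∀ z ∈ QQ, z ∉ K → u z ≤ w z) :
    ∀ z ∈ QQ, u z ≤ w z := by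
  by_contra! ⟨z₀, hz₀, hlt⟩
  have hz₀K : z₀ ∈ K ∩ QQ := ⟨by_contra fun hK => (hfar z₀ hz₀ hK).not_gt hlt, hz₀⟩
  obtain ⟨m, ⟨-, hmQ⟩, hmax⟩ := (hK.inter_right isClosed_QQ).exists_isMaxOn ⟨z₀, hz₀K⟩
    ((hu.mono inter_subset_right).sub hw.continuous.continuousOn)
  have hpos : 0 < u m - w m := (sub_pos.mpr hlt).trans_le (hmax hz₀K)
  have hglobal : IsMaxOn (u - w) QQ m := fun z hz => by
    by_cases hzK : z ∈ K
    · exact hmax ⟨hzK, hz⟩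
    · exact (sub_nonpos.mpr (hfar z hz hzK)).trans hpos.le
  have hm1 : m.1 < 1 := by
    refine hmQ.1.2.lt_of_ne fun h1 => ?_
    have hterm := (isViscSubsol_iff.mp hsub).1 m.2
    have hf := hfw m.2
    rw [← h1, Prod.mk.eta] at hterm hf
    linarith
  exact (hwG m ⟨hmQ.1.1, hm1⟩).not_ge ((isViscSubsol_iff.mp hsub).2.le_of_isLocalMaxOn hw
    ⟨hmQ.1.1, hm1⟩ (hglobal.on_subset fun z hz => mem_QQ_of_mem_Ico hz).localize)

theorem Geps_of_nonneg {lb ε s : ℝ} (hs : 0 ≤ s) : Geps lb ε s = (lb ^ 2 + ε ^ 2) * s / 2 := by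
  simp only [Geps, max_eq_left hs, max_eq_right (neg_nonpos.mpr hs)]
  ring

theorem continuous_uncurry_Geps (lb : ℝ) : Continuous (Function.uncurry (Geps lb)) := by
  unfold Function.uncurry Geps; fun_prop

theorem Geps_zero (lb : ℝ) : Geps lb 0 = Glim lb := by
  funext s; simp [Geps, Glim]

theorem exists_quadratic_majorant {f : ℝ → ℝ} {M : ℝ} (hf : Continuous f) (hfM : ∀ x, f x ≤ M)
    (x₀ : ℝ) {η : ℝ} (hη : 0 < η) : ∃ C > 0, ∀ x, f x ≤ f x₀ + η + C * (x - x₀) ^ 2 := by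
  obtain ⟨δ, hδ, hfδ⟩ := Metric.continuous_iff.mp hf x₀ η hη
  have hM₀ : 0 < M - f x₀ + 1 := by linarith [hfM x₀]
  refine ⟨(M - f x₀ + 1) / δ ^ 2, by positivity, fun x => ?_⟩
  by_cases hx : dist x x₀ < δ
  · have := (abs_lt.mp (Real.dist_eq _ _ ▸ hfδ x hx)).2
    have : 0 ≤ (M - f x₀ + 1) / δ ^ 2 * (x - x₀) ^ 2 := by positivity
    linarith
  · have hsq : δ ^ 2 ≤ (x - x₀) ^ 2 := by
      rw [Real.dist_eq, not_lt] at hx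
      simpa using pow_le_pow_left₀ hδ.le hx 2
    have : M - f x₀ + 1 ≤ (M - f x₀ + 1) / δ ^ 2 * (x - x₀) ^ 2 := by
      rw [div_mul_eq_mul_div, le_div_iff₀ (by positivity)]
      exact mul_le_mul_of_nonneg_left hsq hM₀.le
    linarith [hfM x]

/-- With `K = (λ̄² + 1) C + 1` the barrier `a + C (x - x₀)² + K (1 - t)` is a strict classical
supersolution for every `ε² ≤ 1`, as `½ (λ̄² + ε²) · 2C ≤ K - 1`; its quadratic growth in `x`
dominates the bounded `u` outside a compact set. -/
theorem IsViscSubsol.le_barrier {lb ε M a C x₀ : ℝ} {f : ℝ → ℝ} {u : ℝ × ℝ → ℝ}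
    (hsub : IsViscSubsol (Geps lb ε) f u) (hu : ContinuousOn u QQ) (hε : ε ^ 2 ≤ 1)
    (huM : ∀ z ∈ QQ, u z ≤ M) (hC : 0 < C) (hf : ∀ x, f x ≤ a + C * (x - x₀) ^ 2) :
    ∀ z ∈ QQ, u z ≤ a + C * (z.2 - x₀) ^ 2 + ((lb ^ 2 + 1) * C + 1) * (1 - z.1) := by
  set K := (lb ^ 2 + 1) * C + 1
  set R := max 1 ((M - a) / C)
  refine hsub.le_of_strictSupersolution hu
    (w := fun z => a + C * (z.2 - x₀) ^ 2 + K * (1 - z.1)) (by fun_prop) (fun z _ => ?_)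
    (fun x => by simpa using hf x) ((isCompact_Icc (a := 0) (b := 1)).prod
      (isCompact_Icc (a := x₀ - R) (b := x₀ + R))) (fun z hz hzK => ?_)
  · have ht : timeDeriv (fun z => a + C * (z.2 - x₀) ^ 2 + K * (1 - z.1)) z = -K := by
      simp [timeDeriv]
    have hx : spaceDeriv (spaceDeriv fun z => a + C * (z.2 - x₀) ^ 2 + K * (1 - z.1)) z
        = 2 * C := by
      have h : (fun x => spaceDeriv (fun z => a + C * (z.2 - x₀) ^ 2 + K * (1 - z.1)) (z.1, x))
          = fun x => 2 * C * (x - x₀) := by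
        funext x; simp [spaceDeriv]; ring
      rw [spaceDeriv, h]
      simp
    rw [ht, hx, Geps_of_nonneg (by positivity)]
    nlinarith [sq_nonneg lb]
  · have hR : R < |z.2 - x₀| := by
      by_contra! h
      exact hzK ⟨hz.1, by linarith [(abs_le.mp h).1], by linarith [(abs_le.mp h).2]⟩
    have h1 : (M - a) / C ≤ (z.2 - x₀) ^ 2 := by
      have := le_max_left 1 ((M - a) / C)
      nlinarith [le_max_right 1 ((M - a) / C), sq_abs (z.2 - x₀)]
    have h2 : M - a ≤ C * (z.2 - x₀) ^ 2 := by
      rwa [div_le_iff₀ hC, mul_comm] at h1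
    have h3 : 0 ≤ K * (1 - z.1) := mul_nonneg (by positivity) (by linarith [hz.1.2])
    linarith [huM z hz]

instance nhdsWithin_Ioc_zero_one_neBot : (𝓝[Ioc (0:ℝ) 1] 0).NeBot :=
  left_nhdsWithin_Ioc_neBot zero_lt_one

theorem upperRelaxedLimit_eq (vE : ℝ → ℝ × ℝ → ℝ) :
    upperRelaxedLimit vE = relaxedLimsup (𝓝[Ioc (0:ℝ) 1] 0) QQ vE :=
  rfl

theorem isInteriorViscSubsol_upperRelaxedLimit {G : ℝ → ℝ → ℝ} {vE : ℝ → ℝ × ℝ → ℝ} {M : ℝ}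
    (hG : Continuous (Function.uncurry G))
    (hcont : ∀ ε ∈ Ioc (0:ℝ) 1, ContinuousOn (vE ε) QQ)
    (hM : ∀ ε ∈ Ioc (0:ℝ) 1, ∀ z ∈ QQ, |vE ε z| ≤ M)
    (hsub : ∀ ε ∈ Ioc (0:ℝ) 1, IsInteriorViscSubsol (G ε) (vE ε)) :
    IsInteriorViscSubsol (G 0) (upperRelaxedLimit vE) := by
  intro φ hφ z hz ⟨U, hU, hstrict⟩
  set H : ℝ × (ℝ × ℝ) → ℝ := fun p => -timeDeriv φ p.2 - G p.1 (spaceDeriv (spaceDeriv φ) p.2)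
  have hH : Continuous H :=
    ((continuous_timeDeriv (hφ.of_le one_le_two)).comp continuous_snd).neg.sub
      (hG.comp (continuous_fst.prodMk
        ((continuous_spaceDeriv_spaceDeriv hφ).comp continuous_snd)))
  change H (0, z) ≤ 0
  by_contra! hpos
  obtain ⟨δ, hδ, hδH⟩ := Metric.eventually_nhds_iff.mp (hH.continuousAt.eventually
    (lt_mem_nhds hpos))
  obtain ⟨ρ, hρ, hρU⟩ := Metric.nhds_basis_closedBall.mem_iff.mp
    (inter_mem hU ((isOpen_lt continuous_fst continuous_const).mem_nhds hz.2))
  have hQo : ∀ q ∈ QQ ∩ Metric.closedBall z ρ, q.1 ∈ Ico (0:ℝ) 1 :=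
    fun q hq => ⟨hq.1.1.1, (hρU hq.2).2⟩
  have hsmall : ∀ᶠ ε in 𝓝[Ioc (0:ℝ) 1] 0, ε ∈ Ioc (0:ℝ) 1 ∧ ε < δ :=
    eventually_mem_nhdsWithin.and (nhdsWithin_le_nhds (Iio_mem_nhds hδ))
  obtain ⟨ε, ⟨m, ⟨hmK, hmz⟩, hmax⟩, hε, hεδ⟩ := (frequently_exists_isMaxOn_near
    (eventually_nhdsWithin_of_forall (a := (0:ℝ)) hM)
    (eventually_nhdsWithin_of_forall (a := (0:ℝ)) hcont) hφ.continuous (mem_QQ_of_mem_Ico hz)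
    ((isCompact_closedBall z ρ).inter_left isClosed_QQ) inter_subset_left
    (inter_mem_nhdsWithin QQ (Metric.closedBall_mem_nhds z hρ))
    (fun q hq hqz => hstrict q (hρU hq.2).1 (hQo q hq) hqz) Metric.isOpen_ball
    (Metric.mem_ball_self (lt_min hδ hρ))).and_eventually hsmall |>.exists
  have hloc : IsLocalMaxOn (vE ε - φ) (Prod.fst ⁻¹' Ico 0 1) m := by
    filter_upwards [nhdsWithin_le_nhds (Metric.isOpen_ball.mem_nhds
      (lt_of_lt_of_le hmz (min_le_right δ ρ))), self_mem_nhdsWithin] with q hq hqI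
    exact hmax ⟨mem_QQ_of_mem_Ico hqI, Metric.ball_subset_closedBall hq⟩
  have hle : H (ε, m) ≤ 0 := (hsub ε hε).le_of_isLocalMaxOn hφ (hQo m hmK) hloc
  have hdist : dist (ε, m) (0, z) < δ := by
    rw [Prod.dist_eq, Real.dist_eq, sub_zero, abs_of_pos hε.1]
    exact max_lt hεδ (lt_of_lt_of_le hmz (min_le_left δ ρ))
  exact (hδH hdist).not_ge hle

theorem upperRelaxedLimit_terminal_le {lb M : ℝ} {f : ℝ → ℝ} {vE : ℝ → ℝ × ℝ → ℝ}
    (hf : Continuous f) (hfM : ∀ x, f x ≤ M)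
    (hcont : ∀ ε ∈ Ioc (0:ℝ) 1, ContinuousOn (vE ε) QQ)
    (hM : ∀ ε ∈ Ioc (0:ℝ) 1, ∀ z ∈ QQ, |vE ε z| ≤ M)
    (hsub : ∀ ε ∈ Ioc (0:ℝ) 1, IsViscSubsol (Geps lb ε) f (vE ε)) (x₀ : ℝ) :
    upperRelaxedLimit vE (1, x₀) ≤ f x₀ := by
  refine le_of_forall_pos_le_add fun η hη => ?_
  obtain ⟨C, hC, hfC⟩ := exists_quadratic_majorant hf hfM x₀ hη
  have hbarrier := relaxedLimsup_le (eventually_nhdsWithin_of_forall (a := (0:ℝ)) hM)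
    (mk_one_mem_QQ x₀)
    (w := fun z => f x₀ + η + C * (z.2 - x₀) ^ 2 + ((lb ^ 2 + 1) * C + 1) * (1 - z.1))
    (by fun_prop : Continuous _).continuousWithinAt
    (eventually_nhdsWithin_of_forall (a := (0:ℝ)) fun ε hε => (hsub ε hε).le_barrier (hcont ε hε)
      (pow_le_one₀ hε.1.le hε.2) (fun z hz => (abs_le.mp (hM ε hε z hz)).2) hC hfC)
  simpa [upperRelaxedLimit_eq] using hbarrier

theorem stmt_14 (f : ℝ → ℝ) (hfc : Continuous f)
    (lb : ℝ)
    (vE : ℝ → ℝ × ℝ → ℝ)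
    (hcont : ∀ ε ∈ Set.Ioc (0:ℝ) 1, ContinuousOn (vE ε) QQ)
    (hbd : ∃ C, ∀ ε ∈ Set.Ioc (0:ℝ) 1, ∀ z ∈ QQ, |vE ε z| ≤ C)
    (hsub : ∀ ε ∈ Set.Ioc (0:ℝ) 1, IsViscSubsol (Geps lb ε) f (vE ε))
    (hterm : ∀ ε ∈ Set.Ioc (0:ℝ) 1, ∀ x : ℝ, vE ε (1, x) = f x) :
    (∃ C, ∀ z ∈ QQ, |upperRelaxedLimit vE z| ≤ C) ∧
    UpperSemicontinuousOn (upperRelaxedLimit vE) QQ ∧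
    IsViscSubsol (Glim lb) f (upperRelaxedLimit vE) ∧
    (∀ x : ℝ, upperRelaxedLimit vE (1, x) = f x) := by
  obtain ⟨M, hM⟩ := hbd
  have hFM := eventually_nhdsWithin_of_forall (a := (0:ℝ)) hM
  have h1 : (1:ℝ) ∈ Ioc (0:ℝ) 1 := right_mem_Ioc.mpr zero_lt_one
  have hfM : ∀ x, f x ≤ M := fun x => hterm 1 h1 x ▸ (abs_le.mp (hM 1 h1 _ (mk_one_mem_QQ x))).2
  have hterminal : ∀ x, upperRelaxedLimit vE (1, x) = f x := fun x =>
    le_antisymm (upperRelaxedLimit_terminal_le hfc hfM hcont hM hsub x)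
      (le_relaxedLimsup hFM (mk_one_mem_QQ x)
        (eventually_nhdsWithin_of_forall fun ε hε => (hterm ε hε x).ge))
  refine ⟨⟨M, fun z hz => abs_relaxedLimsup_le hFM hz⟩, upperSemicontinuousOn_relaxedLimsup hFM,
    isViscSubsol_iff.mpr ⟨fun x => (hterminal x).le, ?_⟩, hterminal⟩
  rw [← Geps_zero]
  exact isInteriorViscSubsol_upperRelaxedLimit (continuous_uncurry_Geps lb) hcont hM
    fun ε hε => (isViscSubsol_iff.mp (hsub ε hε)).2
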